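/- For every integer n ≥ 2 and every θ ∈ (0, π), one has sin((n-1)θ)/((n-1)·sin θ) − sin((n+1)θ)/((n+1)·sin θ) ≤ ((3 + cos θ)·n/(n²−1))·(1 − sin(nθ)/(n·sin θ)). -/

import Mathlib

/-!
Put `θ = 2t`. Clearing denominators, the inequality becomes `0 ≤ 2 cos t · F n t (2nt)` with
`F m t φ = 2m sin t (1 + cos² t + cos φ) - 3 cos t sin φ`, and `F 1 t (2t) = 0`.
For fixed `t`, `F m t φ` is affine in `(cos φ, sin φ)`, so by Cauchy–Schwarz it is nonnegative
for every `φ` once `4m² sin² t (2 + cos² t) ≥ 9`. Otherwise `sin t` is small, and then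
`3 F (n+1) t (φ + 2t) - (3 - (4n+2) sin² t) F n t φ` is again affine in `(cos φ, sin φ)` and
nonnegative on the whole circle, which carries the induction on `n`.
-/

open Real

theorem add_mul_add_mul_nonneg_of_sq_add_sq_eq_one {a b c x y : ℝ} (ha : 0 ≤ a)
    (habc : b ^ 2 + c ^ 2 ≤ a ^ 2) (hxy : x ^ 2 + y ^ 2 = 1) : 0 ≤ a + b * x + c * y := by
  have hcs : (b * x + c * y) ^ 2 ≤ a ^ 2 := by
    nlinarith [sq_nonneg (b * y - c * x)]
  linarith [(abs_le_of_sq_le_sq' hcs ha).1]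

noncomputable def askeyGasperForm (m t φ : ℝ) : ℝ :=
  2 * m * sin t * (1 + cos t ^ 2 + cos φ) - 3 * cos t * sin φ

theorem askeyGasperForm_nonneg_of_le {m t : ℝ} (hm : 0 ≤ m * sin t)
    (h : 9 ≤ 4 * m ^ 2 * sin t ^ 2 * (2 + cos t ^ 2)) (φ : ℝ) :
    0 ≤ askeyGasperForm m t φ := by
  have hdisc :
      (2 * m * sin t) ^ 2 + (-3 * cos t) ^ 2 ≤ (2 * m * sin t * (1 + cos t ^ 2)) ^ 2 := by
    nlinarith [mul_nonneg (sq_nonneg (cos t)) (sub_nonneg.2 h)]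
  have hcircle := add_mul_add_mul_nonneg_of_sq_add_sq_eq_one
    (by nlinarith [sq_nonneg (cos t)]) hdisc (cos_sq_add_sin_sq φ)
  unfold askeyGasperForm
  linarith

theorem askeyGasperForm_add_one_nonneg_of_le {n t φ : ℝ} (hn : 1 ≤ n) (hs : 0 ≤ sin t)
    (hsmall : (4 * n + 2) * sin t ^ 2 ≤ 3) (h : 0 ≤ askeyGasperForm n t φ) :
    0 ≤ askeyGasperForm (n + 1) t (φ + 2 * t) := by
  set s := sin t
  set a := (2 - s ^ 2) * (3 + (4 * n ^ 2 + 2 * n) * s ^ 2)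
  set b := -6 + (4 * n ^ 2 - 4 * n + 3) * s ^ 2
  set c := -12 * n * cos t * s
  have hdecomp : 3 * askeyGasperForm (n + 1) t (φ + 2 * t)
      = (3 - (4 * n + 2) * s ^ 2) * askeyGasperForm n t φ
        + 2 * s * (a + b * cos φ + c * sin φ) := by
    simp only [askeyGasperForm, cos_add, sin_add, cos_two_mul, sin_two_mul, a, b, c, s]
    linear_combination (12 * n * sin t * cos φ + 4 * n * sin t ^ 3 + 8 * n ^ 2 * sin t ^ 3
      + 6 * sin t - 6 * sin t * cos φ - 18 * cos t * sin φ) * sin_sq_add_cos_sq t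
  have ha : 0 ≤ a := by
    have : s ^ 2 ≤ 1 := sin_sq_le_one t
    exact mul_nonneg (by linarith) (by nlinarith [sq_nonneg s])
  have hdisc : b ^ 2 + c ^ 2 ≤ a ^ 2 := by
    have hc : c ^ 2 = 144 * n ^ 2 * s ^ 2 * (1 - s ^ 2) := by
      simp only [c, s]; linear_combination 144 * n ^ 2 * sin t ^ 2 * cos_sq_add_sin_sq t
    set p := 12 * n ^ 3 + 24 * n ^ 2 + 6 * n - 6 - s ^ 2 * (16 * n ^ 3 + 16 * n ^ 2 - 2 * n - 3)
      + s ^ 2 * s ^ 2 * (n * (2 * n + 1) ^ 2)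
    -- `16n³ + 16n² - 2n - 3 = (4n + 2)(4n² + 2n - 3/2)`
    have hp : 0 ≤ p := by
      nlinarith [mul_nonneg (sub_nonneg.2 hsmall)
          (by nlinarith : (0 : ℝ) ≤ 4 * n ^ 2 + 2 * n - 3 / 2),
        mul_nonneg (pow_nonneg (sq_nonneg s) 2) (by positivity : (0 : ℝ) ≤ n * (2 * n + 1) ^ 2)]
    have hfactor : a ^ 2 - (b ^ 2 + c ^ 2) = 4 * n * (s ^ 2) ^ 2 * p := by
      rw [hc]; ring
    nlinarith [mul_nonneg (mul_nonneg (by linarith : (0 : ℝ) ≤ 4 * n) (sq_nonneg (s ^ 2))) hp]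
  have hcircle := add_mul_add_mul_nonneg_of_sq_add_sq_eq_one ha hdisc (cos_sq_add_sin_sq φ)
  nlinarith [mul_nonneg (sub_nonneg.2 hsmall) h, mul_nonneg hs hcircle]

theorem askeyGasperForm_two_mul_nat_mul_nonneg {t : ℝ} (hs : 0 ≤ sin t) {n : ℕ} (hn : 1 ≤ n) :
    0 ≤ askeyGasperForm n t (2 * n * t) := by
  induction n, hn using Nat.le_induction with
  | base =>
    have hzero : askeyGasperForm 1 t (2 * t) = 0 := by
      simp only [askeyGasperForm, cos_two_mul, sin_two_mul]
      ring
    simp only [Nat.cast_one, mul_one, hzero, le_refl]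
  | succ n hn ih =>
    have hn' : (1 : ℝ) ≤ n := by exact_mod_cast hn
    have hφ : 2 * ((n + 1 : ℕ) : ℝ) * t = 2 * n * t + 2 * t := by push_cast; ring
    rw [hφ, Nat.cast_succ]
    by_cases hsmall : (4 * n + 2) * sin t ^ 2 ≤ 3
    · exact askeyGasperForm_add_one_nonneg_of_le hn' hs hsmall ih
    · have hlarge : 9 ≤ 8 * ((n : ℝ) + 1) ^ 2 * sin t ^ 2 := by
        nlinarith [mul_le_mul_of_nonneg_left (le_of_lt (not_le.1 hsmall))
          (by positivity : (0 : ℝ) ≤ 8 * ((n : ℝ) + 1) ^ 2)]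
      refine askeyGasperForm_nonneg_of_le (by positivity) ?_ _
      nlinarith [mul_nonneg (mul_nonneg (sq_nonneg ((n : ℝ) + 1)) (sq_nonneg (sin t)))
        (sq_nonneg (cos t))]

theorem mul_sin_two_mul_sub_eq_two_mul_cos_mul_askeyGasperForm (n t : ℝ) :
    n * sin (2 * t) * (3 + cos (2 * t) + 2 * cos (n * (2 * t)))
      - 3 * sin (n * (2 * t)) * (1 + cos (2 * t))
      = 2 * cos t * askeyGasperForm n t (2 * n * t) := by
  rw [show n * (2 * t) = 2 * n * t by ring, askeyGasperForm, sin_two_mul, cos_two_mul]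
  ring

theorem askeyGasper_sub_eq_div {n θ : ℝ} (hn : n ≠ 0) (hn₁ : n - 1 ≠ 0) (hn₂ : n + 1 ≠ 0)
    (hθ : sin θ ≠ 0) :
    (3 + cos θ) * n / (n ^ 2 - 1) * (1 - sin (n * θ) / (n * sin θ))
      - (sin ((n - 1) * θ) / ((n - 1) * sin θ) - sin ((n + 1) * θ) / ((n + 1) * sin θ))
      = (n * sin θ * (3 + cos θ + 2 * cos (n * θ)) - 3 * sin (n * θ) * (1 + cos θ))
        / ((n ^ 2 - 1) * sin θ) := by
  have hsq : n ^ 2 - 1 ≠ 0 := by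
    rw [show n ^ 2 - 1 = (n - 1) * (n + 1) by ring]; exact mul_ne_zero hn₁ hn₂
  rw [show (n - 1) * θ = n * θ - θ by ring, show (n + 1) * θ = n * θ + θ by ring, sin_sub, sin_add]
  field_simp
  ring

theorem askey_gasper_inequality (n : ℕ) (hn : 2 ≤ n) (θ : ℝ) (hθ : θ ∈ Set.Ioo (0 : ℝ) π) :
    Real.sin (((n : ℝ) - 1) * θ) / (((n : ℝ) - 1) * Real.sin θ)
      - Real.sin (((n : ℝ) + 1) * θ) / (((n : ℝ) + 1) * Real.sin θ) ≤
    (3 + Real.cos θ) * (n : ℝ) / ((n : ℝ) ^ 2 - 1)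
      * (1 - Real.sin ((n : ℝ) * θ) / ((n : ℝ) * Real.sin θ)) := by
  obtain ⟨hθ₀, hθπ⟩ := hθ
  have hn' : (2 : ℝ) ≤ n := by exact_mod_cast hn
  have hsin : 0 < sin θ := sin_pos_of_pos_of_lt_pi hθ₀ hθπ
  have hnum : 0 ≤ n * sin θ * (3 + cos θ + 2 * cos (n * θ)) - 3 * sin (n * θ) * (1 + cos θ) := by
    obtain ⟨t, rfl⟩ : ∃ t, θ = 2 * t := ⟨θ / 2, by ring⟩
    rw [mul_sin_two_mul_sub_eq_two_mul_cos_mul_askeyGasperForm]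
    have hcos : 0 ≤ cos t := cos_nonneg_of_mem_Icc ⟨by linarith [pi_pos], by linarith⟩
    have hsin_t : 0 ≤ sin t := sin_nonneg_of_nonneg_of_le_pi (by linarith) (by linarith)
    exact mul_nonneg (by positivity) (askeyGasperForm_two_mul_nat_mul_nonneg hsin_t (by omega))
  rw [← sub_nonneg, askeyGasper_sub_eq_div (by positivity) (by linarith) (by linarith) hsin.ne']
  exact div_nonneg hnum (mul_nonneg (by nlinarith) hsin.le)
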